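/- For each 1 ≤ k ≤ m there is a constant polynomial bound: the word length ‖φ^n(B_k)‖ is bounded above by a polynomial in n of degree k. -/
import Mathlib

/-- The free group `F_{2m}` on generators `A_1, …, A_m, B_1, …, B_m`. -/
abbrev F2m (m : ℕ) := FreeGroup (Fin m ⊕ Fin m)

/-- The generator `A_t` (1-based, `1 ≤ t ≤ m`); junk value `1` otherwise. -/
def Aof (m t : ℕ) : F2m m :=
  if h : 1 ≤ t ∧ t ≤ m then FreeGroup.of (Sum.inl ⟨t - 1, by omega⟩) else 1

/-- The generator `B_t` (1-based, `1 ≤ t ≤ m`); junk value `1` otherwise. -/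
def Bof (m t : ℕ) : F2m m :=
  if h : 1 ≤ t ∧ t ≤ m then FreeGroup.of (Sum.inr ⟨t - 1, by omega⟩) else 1

/-- The product `A_1 A_2 ⋯ A_j`. -/
def prodA (m j : ℕ) : F2m m := ((List.range' 1 j).map (Aof m)).prod

/-- The product `B_1 B_2 ⋯ B_j`. -/
def prodB (m j : ℕ) : F2m m := ((List.range' 1 j).map (Bof m)).prod

/-- The product `A_1^n A_2^n ⋯ A_j^n`. -/
def prodAn (m j n : ℕ) : F2m m := ((List.range' 1 j).map fun t => Aof m t ^ n).prod

/-- The product `A_1^{-n} A_2^{-n} ⋯ A_j^{-n}`. -/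
def prodAinv (m j n : ℕ) : F2m m := ((List.range' 1 j).map fun t => (Aof m t)⁻¹ ^ n).prod

section Aux

lemma prodA_zero (m : ℕ) : prodA m 0 = 1 := by simp [prodA]

lemma prodA_succ (m j : ℕ) : prodA m (j+1) = prodA m j * Aof m (j+1) := by
  unfold prodA
  rw [List.range'_concat]
  simp [Nat.add_comm]

lemma prodB_succ (m j : ℕ) : prodB m (j+1) = prodB m j * Bof m (j+1) := by
  unfold prodB
  rw [List.range'_concat]
  simp [Nat.add_comm]

lemma prodB_one (m : ℕ) : prodB m 1 = Bof m 1 := by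
  simp [prodB]

lemma prodAn_succ (m j n : ℕ) : prodAn m (j+1) n = prodAn m j n * (Aof m (j+1))^n := by
  unfold prodAn
  rw [List.range'_concat]
  simp [Nat.add_comm]

lemma prodAn_zero_left (m n : ℕ) : prodAn m 0 n = 1 := by simp [prodAn]

lemma prodAn_zero_right (m j : ℕ) : prodAn m j 0 = 1 := by
  induction j with
  | zero => exact prodAn_zero_left m 0
  | succ j ih => rw [prodAn_succ, ih, pow_zero, mul_one]

lemma normAof (m t : ℕ) : (Aof m t).norm ≤ 1 := by
  unfold Aof; split
  · rw [FreeGroup.norm_of]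
  · simp [FreeGroup.norm_one]

lemma normBof (m t : ℕ) : (Bof m t).norm ≤ 1 := by
  unfold Bof; split
  · rw [FreeGroup.norm_of]
  · simp [FreeGroup.norm_one]

lemma fgNormPowLe {α : Type*} [DecidableEq α] (x : FreeGroup α) (n : ℕ) :
    FreeGroup.norm (x^n) ≤ n * FreeGroup.norm x := by
  induction n with
  | zero => simp [FreeGroup.norm_one]
  | succ n ih =>
    calc FreeGroup.norm (x^(n+1)) = FreeGroup.norm (x^n * x) := by rw [pow_succ]
      _ ≤ FreeGroup.norm (x^n) + FreeGroup.norm x := FreeGroup.norm_mul_le _ _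
      _ ≤ n * FreeGroup.norm x + FreeGroup.norm x := by omega
      _ = (n+1) * FreeGroup.norm x := by ring

lemma norm_prodAn (m j n : ℕ) : (prodAn m j n).norm ≤ j * n := by
  induction j with
  | zero => simp [prodAn_zero_left, FreeGroup.norm_one]
  | succ j ih =>
    calc (prodAn m (j+1) n).norm
        ≤ (prodAn m j n).norm + ((Aof m (j+1))^n).norm := by
          rw [prodAn_succ]; exact FreeGroup.norm_mul_le _ _
      _ ≤ j * n + n * FreeGroup.norm (Aof m (j+1)) := by
          have := fgNormPowLe (Aof m (j+1)) n; omega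
      _ ≤ j * n + n * 1 := by
          have := normAof m (j+1); nlinarith
      _ ≤ (j+1) * n := by ring_nf; omega

variable (m : ℕ) (φ : MulAut (F2m m))
variable (hφA : ∀ i, 1 ≤ i → i ≤ m →
      φ (Aof m i) = prodA m (i - 1) * Aof m i * (prodA m (i - 1))⁻¹)

include hφA

lemma phi_A_pow (t p : ℕ) (h1 : 1 ≤ t) (h2 : t ≤ m) :
    φ ((Aof m t)^p) = prodA m (t-1) * (Aof m t)^p * (prodA m (t-1))⁻¹ := by
  rw [map_pow, hφA t h1 h2, conj_pow]

lemma phi_prodAn (j n : ℕ) (h : j+1 ≤ m) :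
    φ (prodAn m (j+1) n) = prodAn m j (n+1) * (Aof m (j+1))^n * (prodA m j)⁻¹ := by
  induction j with
  | zero =>
    rw [prodAn_succ, prodAn_zero_left, one_mul, phi_A_pow m φ hφA 1 n le_rfl h]
    simp [prodA_zero, prodAn_zero_left]
  | succ i ih =>
    rw [prodAn_succ m (i+1), map_mul, ih (by omega),
      phi_A_pow m φ hφA (i+2) n (by omega) h]
    show prodAn m i (n+1) * (Aof m (i+1))^n * (prodA m i)⁻¹ *
        (prodA m (i+1) * (Aof m (i+2))^n * (prodA m (i+1))⁻¹) = _
    rw [prodAn_succ m i (n+1), prodA_succ m i, pow_succ]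
    group

lemma phi_pow_A (n j : ℕ) (h : j+1 ≤ m) :
    (φ^n) (Aof m (j+1)) = prodAn m j n * Aof m (j+1) * (prodAn m j n)⁻¹ := by
  induction n with
  | zero => simp [prodAn_zero_right]
  | succ n ih =>
    rw [pow_succ', MulAut.mul_apply, ih]
    cases j with
    | zero =>
      simp only [prodAn_zero_left, one_mul, inv_one, mul_one]
      rw [hφA 1 le_rfl h, prodA_zero]
      group
    | succ i =>
      rw [map_mul, map_mul, map_inv, phi_prodAn m φ hφA i n (by omega),
        hφA (i+2) (by omega) h]
      simp only [show i+2-1 = i+1 from rfl]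
      rw [prodAn_succ m i (n+1), prodA_succ m i, pow_succ]
      group

lemma norm_phi_pow_A (n t : ℕ) : ((φ^n) (Aof m t)).norm ≤ 2*m*n + 1 := by
  by_cases h : 1 ≤ t ∧ t ≤ m
  · obtain ⟨j, rfl⟩ : ∃ j, t = j+1 := ⟨t-1, by omega⟩
    rw [phi_pow_A m φ hφA n j h.2]
    calc (prodAn m j n * Aof m (j+1) * (prodAn m j n)⁻¹).norm
        ≤ (prodAn m j n * Aof m (j+1)).norm + ((prodAn m j n)⁻¹).norm :=
          FreeGroup.norm_mul_le _ _
      _ ≤ (prodAn m j n).norm + (Aof m (j+1)).norm + (prodAn m j n).norm := by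
          rw [FreeGroup.norm_inv_eq]
          have := FreeGroup.norm_mul_le (prodAn m j n) (Aof m (j+1)); omega
      _ ≤ j*n + 1 + j*n := by
          have h1 := norm_prodAn m j n
          have h2 := normAof m (j+1); omega
      _ ≤ 2*m*n + 1 := by nlinarith [h.2]
  · have hA : Aof m t = 1 := by unfold Aof; rw [dif_neg h]
    simp [hA, FreeGroup.norm_one]

lemma norm_phi_prodA (n j : ℕ) : ((φ^n) (prodA m j)).norm ≤ j * (2*m*n + 1) := by
  induction j with
  | zero => simp [prodA_zero, FreeGroup.norm_one]
  | succ j ih =>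
    rw [prodA_succ, map_mul]
    calc ((φ^n) (prodA m j) * (φ^n) (Aof m (j+1))).norm
        ≤ ((φ^n) (prodA m j)).norm + ((φ^n) (Aof m (j+1))).norm :=
          FreeGroup.norm_mul_le _ _
      _ ≤ j * (2*m*n+1) + (2*m*n+1) := by
          have := norm_phi_pow_A m φ hφA n (j+1); omega
      _ = (j+1) * (2*m*n+1) := by ring

variable (hφB : ∀ j, 1 ≤ j → j ≤ m →
      φ (Bof m j) = prodA m m * prodB m j * (prodA m (j - 1))⁻¹)

include hφB

lemma phi_B1 (hm : 1 ≤ m) (n : ℕ) :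
    (φ^n) (Bof m 1) = prodAn m m n * Bof m 1 := by
  obtain ⟨i, rfl⟩ : ∃ i, m = i+1 := ⟨m-1, by omega⟩
  induction n with
  | zero => simp [prodAn_zero_right]
  | succ n ih =>
    rw [pow_succ', MulAut.mul_apply, ih, map_mul,
      phi_prodAn (i+1) φ hφA i n le_rfl, hφB 1 le_rfl hm, prodB_one]
    simp only [show (1:ℕ)-1 = 0 from rfl]
    rw [prodA_zero, prodAn_succ (i+1) i (n+1), prodA_succ (i+1) i, pow_succ]
    group

lemma phi_B_rec (k : ℕ) (h1 : 1 ≤ k) (h2 : k+1 ≤ m) :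
    φ (Bof m (k+1)) = φ (Bof m k) * prodA m (k-1) * Bof m (k+1) * (prodA m k)⁻¹ := by
  rw [hφB (k+1) (by omega) h2, hφB k h1 (by omega), prodB_succ]
  show prodA m m * (prodB m k * Bof m (k+1)) * (prodA m k)⁻¹ = _
  group

end Aux

/-- With `φ` the monodromy automorphism of `F_{2m}`, for each `1 ≤ k ≤ m` the
word length `‖φ^n(B_k)‖` is bounded above by a polynomial in `n` of degree `k`:
there is a constant `C > 0` with `‖φ^n(B_k)‖ ≤ C·n^k` for all `n ≥ 1`. -/
theorem norm_phi_pow_B_poly_upper (m k : ℕ) (hk : 1 ≤ k) (hkm : k ≤ m)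
    (φ : MulAut (F2m m))
    (hφA : ∀ i, 1 ≤ i → i ≤ m →
      φ (Aof m i) = prodA m (i - 1) * Aof m i * (prodA m (i - 1))⁻¹)
    (hφB : ∀ j, 1 ≤ j → j ≤ m →
      φ (Bof m j) = prodA m m * prodB m j * (prodA m (j - 1))⁻¹) :
    ∃ C : ℕ, 0 < C ∧ ∀ n : ℕ, 1 ≤ n →
      FreeGroup.norm ((φ ^ n) (Bof m k)) ≤ C * n ^ k := by
  have key : ∀ k, 1 ≤ k → k ≤ m → ∃ C : ℕ, 0 < C ∧
      ∀ n : ℕ, ((φ^n) (Bof m k)).norm ≤ 1 + C * n^k := by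
    intro k
    induction k with
    | zero => omega
    | succ k ih =>
      intro _ hkm1
      rcases Nat.eq_zero_or_pos k with hk0 | hk1
      · subst hk0
        refine ⟨m, by omega, fun n => ?_⟩
        rw [phi_B1 m φ hφA hφB (by omega) n]
        calc (prodAn m m n * Bof m 1).norm
            ≤ (prodAn m m n).norm + (Bof m 1).norm := FreeGroup.norm_mul_le _ _
          _ ≤ m * n + 1 := by
              have := norm_prodAn m m n
              have := normBof m 1; omega
          _ ≤ 1 + m * n^1 := by rw [pow_one]; omega

      · obtain ⟨C, hC, hCb⟩ := ih hk1 (by omega)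
        refine ⟨1 + C + 4*m*m + 2*m, by omega, ?_⟩
        set C' := 1 + C + 4*m*m + 2*m with hC'
        intro n
        induction n with
        | zero =>
          have := normBof m (k+1)
          simpa using this
        | succ n ihn =>
          have hstep : ∀ x : F2m m, (φ^(n+1)) x = (φ^n) (φ x) := fun x => by
            rw [pow_succ, MulAut.mul_apply]
          have expand : (φ^(n+1)) (Bof m (k+1)) =
              (φ^(n+1)) (Bof m k) * (φ^n) (prodA m (k-1)) *
              (φ^n) (Bof m (k+1)) * ((φ^n) (prodA m k))⁻¹ := by
            rw [hstep, phi_B_rec m φ hφA hφB k hk1 hkm1,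
              map_mul, map_mul, map_mul, map_inv, ← hstep]
          rw [expand]
          have hb : ((φ^n) (prodA m (k-1))).norm ≤ m * (2*m*n+1) := by
            have h := norm_phi_prodA m φ hφA n (k-1)
            have : (k-1) * (2*m*n+1) ≤ m * (2*m*n+1) :=
              Nat.mul_le_mul_right _ (by omega)
            omega
          have hd : ((φ^n) (prodA m k)).norm ≤ m * (2*m*n+1) := by
            have h := norm_phi_prodA m φ hφA n k
            have : k * (2*m*n+1) ≤ m * (2*m*n+1) :=
              Nat.mul_le_mul_right _ (by omega)
            omega
          have ha := hCb (n+1)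
          have total : ((φ^(n+1)) (Bof m k) * (φ^n) (prodA m (k-1)) *
              (φ^n) (Bof m (k+1)) * ((φ^n) (prodA m k))⁻¹).norm ≤
              (1 + C * (n+1)^k) + m*(2*m*n+1) + (1 + C' * n^(k+1)) + m*(2*m*n+1) := by
            have t1 := FreeGroup.norm_mul_le
              ((φ^(n+1)) (Bof m k) * (φ^n) (prodA m (k-1)) * (φ^n) (Bof m (k+1)))
              (((φ^n) (prodA m k))⁻¹)
            have t2 := FreeGroup.norm_mul_le
              ((φ^(n+1)) (Bof m k) * (φ^n) (prodA m (k-1))) ((φ^n) (Bof m (k+1)))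
            have t3 := FreeGroup.norm_mul_le ((φ^(n+1)) (Bof m k)) ((φ^n) (prodA m (k-1)))
            rw [FreeGroup.norm_inv_eq] at t1
            omega
          refine total.trans ?_
          -- arithmetic
          have e1 : (n+1) ≤ (n+1)^k := Nat.le_self_pow (by omega) _
          have e2 : n^(k+1) + (n+1)^k ≤ (n+1)^(k+1) := by
            have h1 : n^(k+1) ≤ n * (n+1)^k := by
              rw [pow_succ, mul_comm]
              exact Nat.mul_le_mul_left _ (Nat.pow_le_pow_left (by omega) k)
            calc n^(k+1) + (n+1)^k ≤ n * (n+1)^k + (n+1)^k := by omega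
              _ = (n+1) * (n+1)^k := by ring
              _ = (n+1)^(k+1) := by rw [pow_succ]; ring
          have e3 : 1 + C * (n+1)^k + m*(2*m*n+1) + m*(2*m*n+1) ≤ C' * (n+1)^k := by
            have h1 : 1 ≤ (n+1)^k := Nat.one_le_pow _ _ (by omega)
            have h4 : 4*m*m*n + 2*m ≤ (4*m*m + 2*m) * (n+1)^k := by
              calc 4*m*m*n + 2*m ≤ (4*m*m + 2*m) * (n+1) := by nlinarith
                _ ≤ (4*m*m + 2*m) * (n+1)^k := Nat.mul_le_mul_left _ e1
            have hsplit : C' * (n+1)^k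
                = (n+1)^k + C * (n+1)^k + (4*m*m + 2*m) * (n+1)^k := by
              rw [hC']; ring
            have hmm : m*(2*m*n+1) + m*(2*m*n+1) = 4*m*m*n + 2*m := by ring
            omega
          calc (1 + C * (n+1)^k) + m*(2*m*n+1) + (1 + C' * n^(k+1)) + m*(2*m*n+1)
              = (1 + C * (n+1)^k + m*(2*m*n+1) + m*(2*m*n+1)) + 1 + C' * n^(k+1) := by
                ring
            _ ≤ C' * (n+1)^k + 1 + C' * n^(k+1) := by omega
            _ ≤ 1 + C' * (n+1)^(k+1) := by
                have : C' * n^(k+1) + C' * (n+1)^k ≤ C' * (n+1)^(k+1) := by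
                  calc C' * n^(k+1) + C' * (n+1)^k = C' * (n^(k+1) + (n+1)^k) := by ring
                    _ ≤ C' * (n+1)^(k+1) := Nat.mul_le_mul_left _ e2
                omega
  obtain ⟨C, hC, hCb⟩ := key k hk hkm
  refine ⟨1 + C, by omega, fun n hn => ?_⟩
  have h1 : 1 ≤ n^k := Nat.one_le_pow _ _ (by omega)
  have := hCb n
  calc ((φ^n) (Bof m k)).norm ≤ 1 + C * n^k := hCb n
    _ ≤ (1 + C) * n^k := by
        have : (1+C) * n^k = n^k + C * n^k := by ring
        omega
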